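/- (Core of the induction in Lemma 3.2.3: stability of weight decompositions under extensions.) Assume in addition that A and B are stable under extensions: whenever X → Y → Z → X[1] is a distinguished triangle with X, Z ∈ A then Y ∈ A, and likewise for B. Let K' → K → K'' → K'[1] be a distinguished triangle in D, and suppose there exist distinguished triangles A' → K' → B' → A'[1] and A'' → K'' → B'' → A''[1] with A', A'' ∈ A and B', B'' ∈ B. Then there exists a distinguished triangle A → K → B → A[1] with A ∈ A and B ∈ B. -/

import Mathlib

open CategoryTheory CategoryTheory.Limits CategoryTheory.Pretriangulated

universe v u

/-!
Write `P * Q` for the extension product: the objects `X` sitting in a distinguished triangle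
`Y ⟶ X ⟶ Z ⟶ Y⟦1⟧` with `P Y` and `Q Z`; the objects with a weight decomposition are `A * B`.
The product is associative by the octahedron axiom, and `B * A ⊆ A * B` because a triangle
`B₀ ⟶ X ⟶ A₀ ⟶ B₀⟦1⟧` has zero connecting map, hence splits. Therefore
`(A * B) * (A * B) = A * (B * A) * B ⊆ (A * A) * (B * B) ⊆ A * B`.
-/

namespace CategoryTheory.ObjectProperty

variable {C : Type*} [Category* C] [Preadditive C] [HasZeroObject C] [HasShift C ℤ]
  [∀ n : ℤ, (shiftFunctor C n).Additive] [Pretriangulated C]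

lemma extensionProduct_self_le {P : ObjectProperty C}
    (hP : ∀ (X Y Z : C) (f : X ⟶ Y) (g : Y ⟶ Z) (h : Z ⟶ X⟦(1 : ℤ)⟧),
      Triangle.mk f g h ∈ distTriang C → P X → P Z → P Y) :
    extensionProduct P P ≤ P :=
  fun _ ⟨_, _, _, _, _, hT, hX, hZ⟩ => hP _ _ _ _ _ _ hT hX hZ

lemma extensionProduct_swap_le {P Q : ObjectProperty C}
    (hPQ : ∀ ⦃X Y : C⦄ (f : X ⟶ Y⟦(1 : ℤ)⟧), P X → Q Y → f = 0) :
    extensionProduct Q P ≤ extensionProduct P Q := by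
  rintro X ⟨Y, Z, f, g, h, hT, hY, hZ⟩
  obtain ⟨e, -⟩ := exists_iso_binaryBiproduct_of_distTriang _ hT (hPQ h hZ hY)
  have hsplit : extensionProduct P Q (Z ⊞ Y) :=
    ⟨_, _, _, _, _, binaryBiproductTriangle_distinguished Z Y, hZ, hY⟩
  exact (extensionProduct P Q).prop_of_iso (biprod.braiding Z Y ≪≫ e.symm) hsplit

lemma extensionProduct_self_extensionProduct_le [IsTriangulated C] {P Q : ObjectProperty C}
    (hP : extensionProduct P P ≤ P) (hQ : extensionProduct Q Q ≤ Q)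
    (hQP : extensionProduct Q P ≤ extensionProduct P Q) :
    extensionProduct (extensionProduct P Q) (extensionProduct P Q) ≤ extensionProduct P Q :=
  calc extensionProduct (extensionProduct P Q) (extensionProduct P Q)
      = extensionProduct P (extensionProduct (extensionProduct Q P) Q) := by
        rw [extensionProduct_assoc, extensionProduct_assoc]
    _ ≤ extensionProduct P (extensionProduct (extensionProduct P Q) Q) :=
        monotone_extensionProduct_right _ (monotone_extensionProduct_left _ hQP)
    _ = extensionProduct (extensionProduct P P) (extensionProduct Q Q) := by
        rw [extensionProduct_assoc, extensionProduct_assoc]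
    _ ≤ extensionProduct P Q :=
        (monotone_extensionProduct_left _ hP).trans (monotone_extensionProduct_right _ hQ)

end CategoryTheory.ObjectProperty

/-- core of the induction in Lemma 3.2.3: in a triangulated category `D` with
strictly full shift-stable subcategories `A`, `B` such that `Hom(X, Y) = 0` for `X ∈ A`,
`Y ∈ B`, assume moreover that `A` and `B` are stable under extensions.  If
`K' → K → K'' → K'[1]` is a distinguished triangle and both `K'` and `K''` admit weight
decompositions (distinguished triangles `A' → K' → B' → A'[1]` and `A'' → K'' → B'' → A''[1]`
with `A', A'' ∈ A` and `B', B'' ∈ B`), then `K` admits a weight decomposition as well. -/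
theorem weight_decomposition_extension
    {D : Type u} [Category.{v} D] [Preadditive D] [HasZeroObject D] [HasShift D ℤ]
    [∀ n : ℤ, (shiftFunctor D n).Additive] [Pretriangulated D] [IsTriangulated D]
    (A B : D → Prop)
    (hAiso : ∀ ⦃X Y : D⦄, (X ≅ Y) → A X → A Y)
    (hBiso : ∀ ⦃X Y : D⦄, (X ≅ Y) → B X → B Y)
    (hAshift : ∀ X : D, A X → A (X⟦(1 : ℤ)⟧))
    (hAunshift : ∀ X : D, A X → A (X⟦(-1 : ℤ)⟧))
    (hBshift : ∀ X : D, B X → B (X⟦(1 : ℤ)⟧))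
    (hBunshift : ∀ X : D, B X → B (X⟦(-1 : ℤ)⟧))
    (hAB : ∀ ⦃X Y : D⦄ (f : X ⟶ Y), A X → B Y → f = 0)
    (hAext : ∀ (X Y Z : D) (f : X ⟶ Y) (g : Y ⟶ Z) (h : Z ⟶ X⟦(1 : ℤ)⟧),
      (Triangle.mk f g h ∈ distTriang D) → A X → A Z → A Y)
    (hBext : ∀ (X Y Z : D) (f : X ⟶ Y) (g : Y ⟶ Z) (h : Z ⟶ X⟦(1 : ℤ)⟧),
      (Triangle.mk f g h ∈ distTriang D) → B X → B Z → B Y)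
    (K' K K'' : D) (u : K' ⟶ K) (v : K ⟶ K'') (w : K'' ⟶ K'⟦(1 : ℤ)⟧)
    (hT : Triangle.mk u v w ∈ distTriang D)
    (A' B' : D) (hA' : A A') (hB' : B B')
    (f' : A' ⟶ K') (g' : K' ⟶ B') (h' : B' ⟶ A'⟦(1 : ℤ)⟧)
    (hT' : Triangle.mk f' g' h' ∈ distTriang D)
    (A'' B'' : D) (hA'' : A A'') (hB'' : B B'')
    (f'' : A'' ⟶ K'') (g'' : K'' ⟶ B'') (h'' : B'' ⟶ A''⟦(1 : ℤ)⟧)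
    (hT'' : Triangle.mk f'' g'' h'' ∈ distTriang D) :
    ∃ (AK BK : D) (f : AK ⟶ K) (g : K ⟶ BK) (h : BK ⟶ AK⟦(1 : ℤ)⟧),
      (Triangle.mk f g h ∈ distTriang D) ∧ A AK ∧ B BK := by
  open ObjectProperty in
  exact extensionProduct_self_extensionProduct_le (extensionProduct_self_le hAext)
    (extensionProduct_self_le hBext)
    (extensionProduct_swap_le fun _ _ f hX hY => hAB f hX (hBshift _ hY)) K
    ⟨K', K'', u, v, w, hT, ⟨A', B', f', g', h', hT', hA', hB'⟩,
      ⟨A'', B'', f'', g'', h'', hT'', hA'', hB''⟩⟩
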